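/- arXiv:2009.10095 — 3 statements merged into one kernel-verified Lean document; each statement's English description precedes it below -/
import Mathlib

section
/- Let d ≥ 2, let μ be the uniform probability measure on the unit sphere of the Euclidean space ℝ^d, and let u, v be unit vectors in ℝ^d. Define sign(s) = 1 if s ≥ 0 and sign(s) = −1 otherwise. Then μ({r on the unit sphere : sign(⟨r,u⟩) ≠ sign(⟨r,v⟩)}) = arccos(⟨u,v⟩) / π. -/
open MeasureTheory Metric
open scoped RealInnerProductSpace

/-- `sgn s = 1` if `s ≥ 0` and `-1` otherwise. -/
noncomputable def sgn (s : ℝ) : ℝ := if 0 ≤ s then 1 else -1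

/-!
Rotation invariance makes the measure of the wedge `{r | 0 ≤ ⟪r, x⟫ ∧ ⟪r, y⟫ < 0}` depend only on
the Gram matrix of `x, y`, since two pairs with the same Gram matrix are exchanged by a product of
two reflections. Cutting the wedge of angle `β + γ` along an intermediate direction shows that its
measure is additive in the angle, up to a hyperplane. Hyperplanes are null: infinitely many
rotated copies of a proper subspace `W` meet pairwise in subspaces of smaller dimension, so by
induction on `dim W` they are almost disjoint sets of equal measure. A nonnegative additive function
on `[0, π]` is linear, and the wedge of angle `π` is a half-sphere of measure `1/2`, so the wedge
of angle `θ` has measure `θ / (2π)`. The event that the hyperplane `r⊥` separates `u` and `v` is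
the disjoint union of the wedges from `u` to `v` and from `v` to `u`.
-/

open Real Set Submodule Module Function

section Isometry

variable {F : Type*} [NormedAddCommGroup F] [InnerProductSpace ℝ F]

theorem exists_linearIsometryEquiv_map_pair {a b a' b' : F} (ha : ‖a‖ = ‖a'‖) (hb : ‖b‖ = ‖b'‖)
    (hab : ⟪a, b⟫ = ⟪a', b'⟫) : ∃ f : F ≃ₗᵢ[ℝ] F, f a = a' ∧ f b = b' := by
  set ρ := reflection (ℝ ∙ (a - a'))ᗮ
  have hρa : ρ a = a' := reflection_sub ha
  set σ := reflection (ℝ ∙ (ρ b - b'))ᗮ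
  have hσa' : σ a' = a' := by
    refine reflection_mem_subspace_eq_self (mem_orthogonal_singleton_iff_inner_right.2 ?_)
    rw [inner_sub_left, ← hρa, ρ.inner_map_map, real_inner_comm a, hab, hρa, real_inner_comm,
      sub_self]
  refine ⟨ρ.trans σ, by simp [hρa, hσa'], reflection_sub (by rw [ρ.norm_map, hb])⟩

theorem Submodule.exists_mem_norm_eq_one {K : Submodule ℝ F} (hK : K ≠ ⊥) :
    ∃ x ∈ K, ‖x‖ = 1 := by
  obtain ⟨x, hxK, hx⟩ := K.exists_mem_ne_zero_of_ne_bot hK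
  exact ⟨‖x‖⁻¹ • x, K.smul_mem _ hxK, norm_smul_inv_norm hx⟩

end Isometry

theorem Submodule.finrank_inf_lt_of_ne {K V : Type*} [DivisionRing K] [AddCommGroup V]
    [Module K V] [FiniteDimensional K V] {W W' : Submodule K V} (h : finrank K W = finrank K W')
    (hne : W ≠ W') : finrank K ↥(W ⊓ W') < finrank K W :=
  finrank_lt_finrank_of_lt (inf_le_left.lt_of_ne fun h' => hne (eq_of_le_of_finrank_eq
    (inf_eq_left.1 h') h))

theorem measure_eq_zero_of_pairwise_aedisjoint {α ι : Type*} [MeasurableSpace α] {μ : Measure α}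
    [IsFiniteMeasure μ] [Infinite ι] {s : ι → Set α} {c : ENNReal}
    (hs : ∀ i, NullMeasurableSet (s i) μ) (hd : Pairwise (AEDisjoint μ on s))
    (hc : ∀ i, μ (s i) = c) : c = 0 := by
  by_contra hc0
  let e := Infinite.natEmbedding ι
  have : μ (⋃ n, s (e n)) = ⊤ := by
    rw [measure_iUnion₀ (hd.comp_of_injective e.injective) fun n => hs (e n)]
    simp [hc, ENNReal.tsum_const_eq_top_of_ne_zero hc0]
  exact measure_ne_top μ _ this

section AdditiveOnInterval

variable {g : ℝ → ℝ} {L : ℝ}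

theorem monotoneOn_of_additive_of_nonneg (hg : ∀ x ∈ Icc 0 L, 0 ≤ g x)
    (hadd : ∀ x y, 0 ≤ x → 0 ≤ y → x + y ≤ L → g (x + y) = g x + g y) :
    MonotoneOn g (Icc 0 L) := fun y hy z hz hyz => by
  have := hadd y (z - y) hy.1 (by linarith) (by linarith [hz.2])
  rw [add_sub_cancel] at this
  linarith [hg (z - y) ⟨by linarith, by linarith [hz.2, hy.1]⟩]

theorem apply_nat_mul_div_of_additive (hL : 0 ≤ L)
    (hadd : ∀ x y, 0 ≤ x → 0 ≤ y → x + y ≤ L → g (x + y) = g x + g y) {n k : ℕ} (hn : 0 < n)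
    (hk : k ≤ n) : g (k * (L / n)) = k / n * g L := by
  have hmul : ∀ k ≤ n, g (k * (L / n)) = k * g (L / n) := by
    intro k
    induction k with
    | zero => intro _; simpa using hadd 0 0 le_rfl le_rfl (by simpa using hL)
    | succ k ih =>
      intro hk
      have hkn : ((k + 1 : ℕ) : ℝ) * (L / n) ≤ L := by
        calc ((k + 1 : ℕ) : ℝ) * (L / n) ≤ n * (L / n) := by gcongr
          _ = L := by field_simp
      push_cast at hkn ⊢
      rw [add_one_mul, hadd _ _ (by positivity) (by positivity) (by linarith), ih (by omega)]
      ring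
  have hgL : g L = n * g (L / n) := by
    simpa [mul_div_cancel₀ L (show (n : ℝ) ≠ 0 by positivity)] using hmul n le_rfl
  rw [hmul k hk, hgL]
  field_simp

/-- Squeeze `x` between the neighbouring multiples of `L / n`, where `g` is known exactly. -/
theorem abs_sub_div_mul_le_of_additive (hL : 0 < L) (hg : ∀ x ∈ Icc 0 L, 0 ≤ g x)
    (hadd : ∀ x y, 0 ≤ x → 0 ≤ y → x + y ≤ L → g (x + y) = g x + g y) {x : ℝ}
    (hx : x ∈ Icc 0 L) {n : ℕ} (hn : 0 < n) : |g x - x / L * g L| ≤ g L / n := by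
  have hn' : (0 : ℝ) < n := by exact_mod_cast hn
  have hgL := hg L ⟨hL.le, le_rfl⟩
  set q := n * x / L with hq
  have hq0 : 0 ≤ q := by have := hx.1; positivity
  have hqn : q ≤ n := by rw [hq, div_le_iff₀ hL]; nlinarith [hx.2]
  have hqx : q * (L / n) = x := by rw [hq]; field_simp
  have hgrid : ∀ k : ℕ, k ≤ n → (k : ℝ) * (L / n) ∈ Icc 0 L := fun k hk =>
    ⟨by positivity, by
      calc (k : ℝ) * (L / n) ≤ n * (L / n) := by gcongr
        _ = L := by field_simp⟩
  have hfloor := Nat.floor_le_of_le hqn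
  have hceil := Nat.ceil_le.2 hqn
  have hlow := monotoneOn_of_additive_of_nonneg hg hadd (hgrid _ hfloor) hx
    (hqx ▸ mul_le_mul_of_nonneg_right (Nat.floor_le hq0) (by positivity))
  have hup := monotoneOn_of_additive_of_nonneg hg hadd hx (hgrid _ hceil)
    (hqx ▸ mul_le_mul_of_nonneg_right (Nat.le_ceil q) (by positivity))
  rw [apply_nat_mul_div_of_additive hL.le hadd hn hfloor] at hlow
  rw [apply_nat_mul_div_of_additive hL.le hadd hn hceil] at hup
  have hshift : ∀ m : ℝ, m / n * g L - x / L * g L = (m - q) * g L / n := fun m => by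
    rw [hq]; field_simp
  have h1 := Nat.sub_one_lt_floor q
  have h2 := Nat.ceil_lt_add_one hq0
  rw [abs_le]
  constructor
  · calc -(g L / n) ≤ (⌊q⌋₊ - q) * g L / n := by rw [← neg_div]; gcongr; nlinarith
      _ = ⌊q⌋₊ / n * g L - x / L * g L := (hshift _).symm
      _ ≤ g x - x / L * g L := by linarith
  · calc g x - x / L * g L ≤ ⌈q⌉₊ / n * g L - x / L * g L := by linarith
      _ = (⌈q⌉₊ - q) * g L / n := hshift _
      _ ≤ g L / n := by gcongr; nlinarith

theorem eq_div_mul_of_additive_of_nonneg (hL : 0 < L) (hg : ∀ x ∈ Icc 0 L, 0 ≤ g x)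
    (hadd : ∀ x y, 0 ≤ x → 0 ≤ y → x + y ≤ L → g (x + y) = g x + g y) {x : ℝ}
    (hx : x ∈ Icc 0 L) : g x = x / L * g L := by
  have : |g x - x / L * g L| ≤ 0 :=
    ge_of_tendsto (tendsto_const_div_atTop_nhds_zero_nat (g L))
      (Filter.eventually_atTop.2 ⟨1, fun n hn => abs_sub_div_mul_le_of_additive hL hg hadd hx hn⟩)
  exact sub_eq_zero.1 (abs_nonpos_iff.1 this)

end AdditiveOnInterval

namespace RandomHyperplane

variable {E : Type*} [NormedAddCommGroup E] [InnerProductSpace ℝ E]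

noncomputable def circlePoint (a b : E) (t : ℝ) : E := cos t • a + sin t • b

section Circle

variable {a b : E}

@[simp] theorem circlePoint_zero (a b : E) : circlePoint a b 0 = a := by simp [circlePoint]

@[simp] theorem circlePoint_pi (a b : E) : circlePoint a b π = -a := by simp [circlePoint]

theorem inner_circlePoint_right (r a b : E) (t : ℝ) :
    ⟪r, circlePoint a b t⟫ = cos t * ⟪r, a⟫ + sin t * ⟪r, b⟫ := by
  simp only [circlePoint, inner_add_right, real_inner_smul_right]

theorem inner_circlePoint_circlePoint (ha : ‖a‖ = 1) (hb : ‖b‖ = 1) (hab : ⟪a, b⟫ = 0)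
    (s t : ℝ) : ⟪circlePoint a b s, circlePoint a b t⟫ = cos (t - s) := by
  have hba : ⟪b, a⟫ = 0 := by rw [real_inner_comm, hab]
  simp only [circlePoint, inner_add_left, inner_add_right, real_inner_smul_left,
    real_inner_smul_right, real_inner_self_eq_norm_sq, ha, hb, hab, hba, cos_sub]
  ring

theorem norm_circlePoint (ha : ‖a‖ = 1) (hb : ‖b‖ = 1) (hab : ⟪a, b⟫ = 0) (t : ℝ) :
    ‖circlePoint a b t‖ = 1 := by
  rw [norm_eq_sqrt_real_inner, inner_circlePoint_circlePoint ha hb hab, sub_self, cos_zero,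
    sqrt_one]

end Circle

noncomputable def sphereMap (f : E ≃ₗᵢ[ℝ] E) (r : sphere (0 : E) 1) : sphere (0 : E) 1 :=
  ⟨f r, by simp [f.norm_map]⟩

theorem continuous_sphereMap (f : E ≃ₗᵢ[ℝ] E) : Continuous (sphereMap f) :=
  (f.continuous.comp continuous_subtype_val).subtype_mk _

theorem preimage_sphereMap_setOf_mem_map (f : E ≃ₗᵢ[ℝ] E) (W : Submodule ℝ E) :
    sphereMap f ⁻¹' {r | (r : E) ∈ W.map (f.toLinearEquiv : E →ₗ[ℝ] E)} =
      {r : sphere (0 : E) 1 | (r : E) ∈ W} := by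
  refine Set.ext fun r => ?_
  change (f r : E) ∈ W.map (f.toLinearEquiv : E →ₗ[ℝ] E) ↔ (r : E) ∈ W
  rw [Submodule.mem_map_equiv]
  simp

theorem circlePoint_notMem_map {W : Submodule ℝ E} {e w : E} (he : ‖e‖ = 1) (hw : ‖w‖ = 1)
    (hew : ⟪e, w⟫ = 0) (hwW : w ∈ Wᗮ) {f : E ≃ₗᵢ[ℝ] E} {s t : ℝ}
    (hfw : f w = circlePoint e w (s + π / 2)) (hst : sin (t - s) ≠ 0) :
    circlePoint e w t ∉ W.map (f.toLinearEquiv : E →ₗ[ℝ] E) := by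
  rintro ⟨y, hyW, hy⟩
  refine hst ?_
  rw [← cos_pi_div_two_sub, show π / 2 - (t - s) = s + π / 2 - t by ring,
    ← inner_circlePoint_circlePoint he hw hew, ← hfw, ← hy]
  exact (f.inner_map_map y w).trans (inner_right_of_mem_orthogonal hyW hwW)

def wedge (x y : E) : Set (sphere (0 : E) 1) := {r | 0 ≤ ⟪(r : E), x⟫ ∧ ⟪(r : E), y⟫ < 0}

section Wedge

variable {a b : E}

@[simp] theorem wedge_self (x : E) : wedge x x = ∅ :=
  eq_empty_of_forall_notMem fun _ h => h.1.not_gt h.2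

theorem wedge_subset_union (x y z : E) : wedge x z ⊆ wedge x y ∪ wedge y z := fun r hr =>
  (lt_or_ge ⟪(r : E), y⟫ 0).imp (fun hy => ⟨hr.1, hy⟩) fun hy => ⟨hy, hr.2⟩

theorem disjoint_wedge (x y z : E) : Disjoint (wedge x y) (wedge y z) :=
  disjoint_left.2 fun _ h h' => h.2.not_ge h'.1

theorem preimage_sphereMap_wedge (f : E ≃ₗᵢ[ℝ] E) (x y : E) :
    sphereMap f ⁻¹' wedge (f x) (f y) = wedge x y := by
  refine Set.ext fun r => ?_
  simp [wedge, sphereMap, f.inner_map_map]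

theorem setOf_sgn_ne_eq_union (x y : E) :
    {r : sphere (0 : E) 1 | sgn ⟪(r : E), x⟫ ≠ sgn ⟪(r : E), y⟫} = wedge x y ∪ wedge y x := by
  refine Set.ext fun r => ?_
  simp only [wedge, sgn, mem_union, mem_ofPred_eq]
  split_ifs <;> grind

theorem sin_mul_inner_circlePoint (r a b : E) (β γ : ℝ) :
    sin β * ⟪r, circlePoint a b (β + γ)⟫ =
      sin (β + γ) * ⟪r, circlePoint a b β⟫ - sin γ * ⟪r, a⟫ := by
  simp only [inner_circlePoint_right, sin_add, cos_add]
  linear_combination (-⟪r, a⟫ * sin γ) * sin_sq_add_cos_sq β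

theorem wedge_union_subset {β γ : ℝ} (hβ : 0 ≤ β) (hγ : 0 ≤ γ) (hβγ : β + γ ≤ π) :
    wedge a (circlePoint a b β) ∪ wedge (circlePoint a b β) (circlePoint a b (β + γ)) ⊆
      wedge a (circlePoint a b (β + γ)) ∪ {r | ⟪(r : E), a⟫ = 0} := by
  rcases hβ.eq_or_lt with rfl | hβ
  · simp
  rcases hγ.eq_or_lt with rfl | hγ
  · simp
  have hsβ : 0 < sin β := sin_pos_of_pos_of_lt_pi hβ (by linarith)
  have hsγ : 0 < sin γ := sin_pos_of_pos_of_lt_pi hγ (by linarith)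
  have hsβγ : 0 ≤ sin (β + γ) := sin_nonneg_of_nonneg_of_le_pi (by linarith) hβγ
  rintro r (⟨hra, hrβ⟩ | ⟨hrβ, hrβγ⟩)
  · refine (eq_or_lt_of_le hra).symm.imp (fun hra => ⟨hra.le, ?_⟩) Eq.symm
    have := sin_mul_inner_circlePoint (r : E) a b β γ
    nlinarith
  · have := sin_mul_inner_circlePoint (r : E) a b β γ
    exact Or.inl ⟨by nlinarith, hrβγ⟩

end Wedge

variable [MeasurableSpace E] [BorelSpace E]

def IsRotationInvariant (μ : Measure (sphere (0 : E) 1)) : Prop :=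
  ∀ f : E ≃ₗᵢ[ℝ] E, μ.map (sphereMap f) = μ

variable {μ : Measure (sphere (0 : E) 1)}

theorem IsRotationInvariant.measure_preimage (hμ : IsRotationInvariant μ) (f : E ≃ₗᵢ[ℝ] E)
    {s : Set (sphere (0 : E) 1)} (hs : MeasurableSet s) : μ (sphereMap f ⁻¹' s) = μ s := by
  rw [← Measure.map_apply (continuous_sphereMap f).measurable hs, hμ]

theorem measurable_inner_coe (x : E) : Measurable fun r : sphere (0 : E) 1 => ⟪(r : E), x⟫ :=
  (continuous_subtype_val.inner continuous_const).measurable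

theorem measurableSet_setOf_mem [FiniteDimensional ℝ E] (W : Submodule ℝ E) :
    MeasurableSet {r : sphere (0 : E) 1 | (r : E) ∈ W} :=
  (W.closed_of_finiteDimensional.preimage continuous_subtype_val).measurableSet

theorem IsRotationInvariant.measure_setOf_mem_eq_zero [FiniteDimensional ℝ E] [IsFiniteMeasure μ]
    (hμ : IsRotationInvariant μ) {W : Submodule ℝ E} (hW : W ≠ ⊤) :
    μ {r | (r : E) ∈ W} = 0 := by
  induction hn : finrank ℝ W using Nat.strong_induction_on generalizing W with
  | _ n ih =>
  rcases eq_or_ne W ⊥ with rfl | hW0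
  · simp [ne_zero_of_mem_unit_sphere]
  obtain ⟨e, heW, he⟩ := W.exists_mem_norm_eq_one hW0
  obtain ⟨w, hwW, hw⟩ := Wᗮ.exists_mem_norm_eq_one (by rwa [Ne, orthogonal_eq_bot_iff])
  have hew : ⟪e, w⟫ = 0 := inner_right_of_mem_orthogonal heW hwW
  choose f hfe hfw using fun t : ℝ =>
    exists_linearIsometryEquiv_map_pair (a := e) (b := w)
      (a' := circlePoint e w t) (b' := circlePoint e w (t + π / 2))
      (by rw [he, norm_circlePoint he hw hew]) (by rw [hw, norm_circlePoint he hw hew])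
      (by rw [hew, inner_circlePoint_circlePoint he hw hew]; simp)
  set V : Ico 0 π → Submodule ℝ E := fun t => W.map ((f t).toLinearEquiv : E →ₗ[ℝ] E)
  have hVn : ∀ t, finrank ℝ (V t) = n := fun t => by
    rw [← hn]
    exact LinearEquiv.finrank_map_eq _ _
  have hV : Pairwise fun s t => V s ≠ V t := by
    rintro ⟨s, hs⟩ ⟨t, ht⟩ hst hV
    have hmem : circlePoint e w t ∈ V ⟨s, hs⟩ := hV ▸ hfe t ▸ mem_map_of_mem heW
    refine circlePoint_notMem_map he hw hew hwW (hfw s) ?_ hmem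
    rw [Ne, sin_eq_zero_iff_of_lt_of_lt (by linarith [hs.2, ht.1]) (by linarith [hs.1, ht.2]),
      sub_eq_zero]
    exact fun h => hst (Subtype.ext h.symm)
  have hnE : n < finrank ℝ E := hn ▸ Submodule.finrank_lt hW
  have hlt : ∀ s t, s ≠ t → finrank ℝ ↥(V s ⊓ V t) < n := fun s t hst => by
    rw [← hVn s]
    exact finrank_inf_lt_of_ne ((hVn s).trans (hVn t).symm) (hV hst)
  have : Infinite (Ico 0 π) := (Ico_infinite pi_pos).to_subtype
  refine measure_eq_zero_of_pairwise_aedisjoint (μ := μ)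
    (s := fun t => {r : sphere (0 : E) 1 | (r : E) ∈ V t})
    (fun t => (measurableSet_setOf_mem _).nullMeasurableSet) (fun s t hst => ?_) fun t => ?_
  · refine ih _ (hlt s t hst) (fun h => ?_) rfl
    have := hlt s t hst
    rw [h, finrank_top] at this
    omega
  · rw [← preimage_sphereMap_setOf_mem_map (f t) W,
      hμ.measure_preimage _ (measurableSet_setOf_mem _)]


theorem measurableSet_wedge (x y : E) : MeasurableSet (wedge x y) :=
  (measurable_inner_coe x measurableSet_Ici).inter (measurable_inner_coe y measurableSet_Iio)

theorem IsRotationInvariant.measure_wedge_congr (hμ : IsRotationInvariant μ) {x y x' y' : E}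
    (hx : ‖x‖ = ‖x'‖) (hy : ‖y‖ = ‖y'‖) (hxy : ⟪x, y⟫ = ⟪x', y'⟫) :
    μ (wedge x y) = μ (wedge x' y') := by
  obtain ⟨f, rfl, rfl⟩ := exists_linearIsometryEquiv_map_pair hx hy hxy
  rw [← preimage_sphereMap_wedge, hμ.measure_preimage f (measurableSet_wedge _ _)]

theorem IsRotationInvariant.measure_inner_eq_zero [FiniteDimensional ℝ E] [IsFiniteMeasure μ]
    (hμ : IsRotationInvariant μ) {a : E} (ha : a ≠ 0) : μ {r | ⟪(r : E), a⟫ = 0} = 0 := by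
  have hW : (ℝ ∙ a)ᗮ ≠ ⊤ := fun h =>
    ha (inner_self_eq_zero.1 (mem_orthogonal_singleton_iff_inner_right.1 (h ▸ mem_top)))
  simpa [mem_orthogonal_singleton_iff_inner_right, real_inner_comm a] using
    hμ.measure_setOf_mem_eq_zero hW

theorem IsRotationInvariant.measureReal_setOf_sgn_ne [IsFiniteMeasure μ]
    (hμ : IsRotationInvariant μ) {x y : E} (h : ‖x‖ = ‖y‖) :
    μ.real {r | sgn ⟪(r : E), x⟫ ≠ sgn ⟪(r : E), y⟫} = 2 * μ.real (wedge x y) := by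
  rw [setOf_sgn_ne_eq_union, measureReal_union (disjoint_wedge x y x) (measurableSet_wedge y x),
    two_mul]
  exact congrArg (_ + ·) (congrArg ENNReal.toReal
    (hμ.measure_wedge_congr h.symm h (real_inner_comm x y)))

theorem IsRotationInvariant.measureReal_wedge_neg [FiniteDimensional ℝ E] [IsProbabilityMeasure μ]
    (hμ : IsRotationInvariant μ) {a : E} (ha : a ≠ 0) : μ.real (wedge a (-a)) = 1 / 2 := by
  have hsep : μ.real {r | sgn ⟪(r : E), a⟫ ≠ sgn ⟪(r : E), -a⟫} = 1 := by
    rw [measureReal_congr (ae_eq_univ.2 (measure_mono_null ?_ (hμ.measure_inner_eq_zero ha))),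
      probReal_univ]
    intro r hr
    simp only [mem_compl_iff, mem_ofPred_eq, not_not, inner_neg_right, sgn] at hr ⊢
    split_ifs at hr <;> linarith
  rw [hμ.measureReal_setOf_sgn_ne (norm_neg a).symm] at hsep
  linarith

theorem IsRotationInvariant.measureReal_wedge_add [FiniteDimensional ℝ E] [IsFiniteMeasure μ]
    (hμ : IsRotationInvariant μ) {a b : E} (ha : ‖a‖ = 1) (hb : ‖b‖ = 1) (hab : ⟪a, b⟫ = 0)
    {β γ : ℝ} (hβ : 0 ≤ β) (hγ : 0 ≤ γ) (hβγ : β + γ ≤ π) :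
    μ.real (wedge a (circlePoint a b (β + γ))) =
      μ.real (wedge a (circlePoint a b β)) + μ.real (wedge a (circlePoint a b γ)) := by
  have hrot : μ.real (wedge (circlePoint a b β) (circlePoint a b (β + γ))) =
      μ.real (wedge a (circlePoint a b γ)) := by
    refine congrArg ENNReal.toReal <| hμ.measure_wedge_congr
      (by rw [norm_circlePoint ha hb hab, ha])
      (by rw [norm_circlePoint ha hb hab, norm_circlePoint ha hb hab]) ?_
    rw [inner_circlePoint_circlePoint ha hb hab, inner_circlePoint_right,
      real_inner_self_eq_norm_sq, ha, hab, add_sub_cancel_left]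
    ring
  have hae : wedge a (circlePoint a b (β + γ)) =ᵐ[μ]
      (wedge a (circlePoint a b β) ∪ wedge (circlePoint a b β) (circlePoint a b (β + γ)) :
        Set (sphere (0 : E) 1)) :=
    (wedge_subset_union _ _ _).eventuallyLE.antisymm <| ae_le_set.2 <|
      measure_mono_null (sdiff_subset_iff.2 (wedge_union_subset hβ hγ hβγ))
        (hμ.measure_inner_eq_zero (norm_ne_zero_iff.1 (ha ▸ one_ne_zero)))
  rw [measureReal_congr hae, measureReal_union (disjoint_wedge _ _ _) (measurableSet_wedge _ _),
    hrot]

theorem IsRotationInvariant.measureReal_wedge_circlePoint [FiniteDimensional ℝ E]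
    [IsProbabilityMeasure μ] (hμ : IsRotationInvariant μ) {a b : E} (ha : ‖a‖ = 1) (hb : ‖b‖ = 1)
    (hab : ⟪a, b⟫ = 0) {θ : ℝ} (hθ : θ ∈ Icc 0 π) :
    μ.real (wedge a (circlePoint a b θ)) = θ / (2 * π) := by
  rw [eq_div_mul_of_additive_of_nonneg (g := fun t => μ.real (wedge a (circlePoint a b t))) pi_pos
    (fun _ _ => measureReal_nonneg)
    (fun _ _ => hμ.measureReal_wedge_add ha hb hab) hθ, circlePoint_pi,
    hμ.measureReal_wedge_neg (norm_ne_zero_iff.1 (ha ▸ one_ne_zero))]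
  field_simp

theorem IsRotationInvariant.measureReal_wedge [FiniteDimensional ℝ E] [IsProbabilityMeasure μ]
    (hμ : IsRotationInvariant μ) (hE : 2 ≤ finrank ℝ E) {x y : E} (hx : ‖x‖ = 1) (hy : ‖y‖ = 1) :
    μ.real (wedge x y) = arccos ⟪x, y⟫ / (2 * π) := by
  let e := stdOrthonormalBasis ℝ E
  let a := e ⟨0, by omega⟩
  let b := e ⟨1, by omega⟩
  have ha : ‖a‖ = 1 := e.orthonormal.1 _
  have hb : ‖b‖ = 1 := e.orthonormal.1 _
  have hab : ⟪a, b⟫ = 0 := e.orthonormal.2 (by simp)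
  have hxy := abs_le.1 (by simpa [hx, hy] using abs_real_inner_le_norm x y)
  rw [← hμ.measureReal_wedge_circlePoint ha hb hab ⟨arccos_nonneg _, arccos_le_pi _⟩]
  refine congrArg ENNReal.toReal (hμ.measure_wedge_congr (by rw [hx, ha])
    (by rw [hy, norm_circlePoint ha hb hab]) ?_)
  rw [inner_circlePoint_right, real_inner_self_eq_norm_sq, ha, hab, cos_arccos hxy.1 hxy.2]
  ring

end RandomHyperplane

theorem gw_hyperplane_separation_probability (d : ℕ) (hd : 2 ≤ d)
    (μ : Measure (sphere (0 : EuclideanSpace ℝ (Fin d)) 1))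
    [IsProbabilityMeasure μ]
    (hinv : ∀ f : EuclideanSpace ℝ (Fin d) ≃ₗᵢ[ℝ] EuclideanSpace ℝ (Fin d),
      Measure.map
        (fun x : sphere (0 : EuclideanSpace ℝ (Fin d)) 1 =>
          (⟨f x, by
            simp [mem_sphere_zero_iff_norm, f.norm_map, x.2]⟩ :
              sphere (0 : EuclideanSpace ℝ (Fin d)) 1)) μ = μ)
    (u v : EuclideanSpace ℝ (Fin d)) (hu : ‖u‖ = 1) (hv : ‖v‖ = 1) :
    μ {r : sphere (0 : EuclideanSpace ℝ (Fin d)) 1 |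
        sgn ⟪(r : EuclideanSpace ℝ (Fin d)), u⟫ ≠ sgn ⟪(r : EuclideanSpace ℝ (Fin d)), v⟫}
      = ENNReal.ofReal (Real.arccos ⟪u, v⟫ / Real.pi) := by
  have hμ : RandomHyperplane.IsRotationInvariant μ := hinv
  have hE : 2 ≤ finrank ℝ (EuclideanSpace ℝ (Fin d)) := by rwa [finrank_euclideanSpace_fin]
  rw [← ofReal_measureReal, hμ.measureReal_setOf_sgn_ne (hu.trans hv.symm),
    hμ.measureReal_wedge hE hu hv]
  congr 1
  field_simp
end

section
/- Let n ∈ ℕ, let ω : Fin n → Fin n → ℝ be a symmetric weight function with ω i j ≥ 0 for all i, j, let d ≥ 1, and let v : Fin n → ℝ^d be unit vectors satisfying the relaxation-optimality bound: for every assignment z : Fin n → ℝ with values in {−1,1}, (1/2)·∑_{i<j} ω i j · (1 − ⟨v i, v j⟩) ≥ Cut(z). Then for every assignment z : Fin n → ℝ with values in {−1,1}, (1/π)·∑_{i<j} ω i j · arccos(⟨v i, v j⟩) ≥ α · Cut(z), where α = (2/π) · inf_{θ ∈ (0, π]} θ/(1 − cos θ). In particular the expected cut produced by random-hyperplane rounding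 of an optimal solution of the MAXCUT vector relaxation is at least α times the maximum cut. -/
open Finset
open scoped RealInnerProductSpace

/-- The cut value of a `{-1,1}`-valued assignment `z` for symmetric weights `ω`. -/
noncomputable def cutVal (n : ℕ) (ω : Fin n → Fin n → ℝ) (z : Fin n → ℝ) : ℝ :=
  (1 / 2) * ∑ i : Fin n, ∑ j : Fin n, if i < j then ω i j * (1 - z i * z j) else 0

/-- The objective of the MAXCUT vector relaxation for unit vectors `v`. -/
noncomputable def relaxVal (d n : ℕ) (ω : Fin n → Fin n → ℝ)
    (v : Fin n → EuclideanSpace ℝ (Fin d)) : ℝ :=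
  (1 / 2) * ∑ i : Fin n, ∑ j : Fin n, if i < j then ω i j * (1 - ⟪v i, v j⟫) else 0

/-- The Goemans-Williamson constant `α = (2/π) · inf_{θ ∈ (0, π]} θ/(1 − cos θ)`. -/
noncomputable def gwAlpha : ℝ :=
  (2 / Real.pi) * ⨅ θ : Set.Ioc (0 : ℝ) Real.pi, (θ : ℝ) / (1 - Real.cos θ)

instance : Nonempty (Set.Ioc (0 : ℝ) Real.pi) :=
  ⟨⟨Real.pi, Real.pi_pos, le_refl _⟩⟩

lemma gw_bdd : BddBelow (Set.range fun θ : Set.Ioc (0 : ℝ) Real.pi =>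
    (θ : ℝ) / (1 - Real.cos θ)) := by
  refine ⟨0, ?_⟩
  rintro x ⟨θ, rfl⟩
  exact div_nonneg θ.2.1.le (by linarith [Real.cos_le_one (θ : ℝ)])

lemma gwAlpha_nonneg : 0 ≤ gwAlpha := by
  apply mul_nonneg (by positivity)
  exact le_ciInf fun θ => div_nonneg θ.2.1.le (by linarith [Real.cos_le_one (θ : ℝ)])

lemma gw_key (θ : ℝ) (h0 : 0 ≤ θ) (hπ : θ ≤ Real.pi) :
    gwAlpha * (1 - Real.cos θ) ≤ 2 * θ / Real.pi := by
  rcases eq_or_lt_of_le h0 with rfl | hpos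
  · simp
  · have hc : Real.cos θ < 1 := by
      have := Real.cos_lt_cos_of_nonneg_of_le_pi le_rfl hπ hpos
      simpa using this
    have hle : (⨅ θ : Set.Ioc (0 : ℝ) Real.pi, (θ : ℝ) / (1 - Real.cos θ)) ≤
        θ / (1 - Real.cos θ) := ciInf_le gw_bdd ⟨θ, hpos, hπ⟩
    have hπ0 := Real.pi_pos
    have h1 : (0:ℝ) < 1 - Real.cos θ := by linarith
    rw [gwAlpha]
    rw [div_mul_eq_mul_div, div_mul_eq_mul_div, div_le_div_iff₀ hπ0 hπ0]
    have := mul_le_mul_of_nonneg_left hle (by norm_num : (0:ℝ) ≤ 2)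
    calc 2 * (⨅ θ : Set.Ioc (0 : ℝ) Real.pi, (θ : ℝ) / (1 - Real.cos θ)) *
          (1 - Real.cos θ) * Real.pi
        ≤ 2 * (θ / (1 - Real.cos θ)) * (1 - Real.cos θ) * Real.pi := by
          apply mul_le_mul_of_nonneg_right _ hπ0.le
          exact mul_le_mul_of_nonneg_right this h1.le
      _ = 2 * θ * Real.pi := by field_simp

theorem gw_rounding_approximation_guarantee (n d : ℕ) (hd : 1 ≤ d)
    (ω : Fin n → Fin n → ℝ) (hsymm : ∀ i j, ω i j = ω j i)
    (hnonneg : ∀ i j, 0 ≤ ω i j)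
    (v : Fin n → EuclideanSpace ℝ (Fin d)) (hv : ∀ i, ‖v i‖ = 1)
    (hopt : ∀ z : Fin n → ℝ, (∀ i, z i = 1 ∨ z i = -1) →
      cutVal n ω z ≤ relaxVal d n ω v) :
    ∀ z : Fin n → ℝ, (∀ i, z i = 1 ∨ z i = -1) →
      (1 / Real.pi) *
          (∑ i : Fin n, ∑ j : Fin n,
            (if i < j then ω i j * Real.arccos ⟪v i, v j⟫ else 0))
        ≥ gwAlpha * cutVal n ω z := by
  intro z hz
  have hπ0 := Real.pi_pos
  have h1 : gwAlpha * cutVal n ω z ≤ gwAlpha * relaxVal d n ω v :=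
    mul_le_mul_of_nonneg_left (hopt z hz) gwAlpha_nonneg
  refine le_trans h1 ?_
  rw [relaxVal, ← mul_assoc, Finset.mul_sum, Finset.mul_sum]
  simp_rw [Finset.mul_sum]
  apply Finset.sum_le_sum
  intro i _
  apply Finset.sum_le_sum
  intro j _
  by_cases hij : i < j
  · simp only [hij, if_true]
    have hinner : |⟪v i, v j⟫| ≤ 1 := by
      have := abs_real_inner_le_norm (v i) (v j)
      rwa [hv i, hv j, mul_one] at this
    have h1' : -1 ≤ ⟪v i, v j⟫ := by cases abs_le.mp hinner; linarith
    have h2' : ⟪v i, v j⟫ ≤ 1 := (abs_le.mp hinner).2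
    set θ := Real.arccos ⟪v i, v j⟫ with hθ
    have hcos : Real.cos θ = ⟪v i, v j⟫ := Real.cos_arccos h1' h2'
    have hkey := gw_key θ (Real.arccos_nonneg _) (Real.arccos_le_pi _)
    rw [hcos] at hkey
    have := mul_le_mul_of_nonneg_left hkey (hnonneg i j)
    calc gwAlpha * (1 / 2) * (ω i j * (1 - ⟪v i, v j⟫))
        = (ω i j * (gwAlpha * (1 - ⟪v i, v j⟫))) / 2 := by ring
      _ ≤ (ω i j * (2 * θ / Real.pi)) / 2 := by linarith
      _ = 1 / Real.pi * (ω i j * θ) := by field_simp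
  · simp [hij]
end

section
/- Let n ≥ 2, let ω : Fin n → Fin n → ℝ be symmetric, let k < n−1 be an index among the first n−1 variables, and let a ∈ {−1, 1}. For z : Fin (n−1) → ℝ with values in {−1,1}, let z̃ : Fin n → ℝ denote the extension of z whose value at the last index is z̃(last) = a · z(k), i.e., the last variable is replaced by a times variable k. Define the reduced symmetric weights ω' : Fin (n−1) → Fin (n−1) → ℝ by ω' i j = ω i j + a·ω i (last) if j = k and i ≠ k, ω' i j = ω i j + a·ω j (last) if i = k and j ≠ k, and ω' i j = ω i j otherwise. Then for every such z, (1/2)·∑_{i<j≤n} ω i j · (1 − z̃ i · z̃ j) = (1/2)·∑_{i<j≤n−1} ω' i j · (1 − z i · z j) + ((1−a)/2)·∑_{i≤n−1} ω i (last). -/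
open Finset

theorem rqaoa_keylem (m : ℕ) (ω : Fin (m + 1) → Fin (m + 1) → ℝ)
    (k : Fin m) (a : ℝ)
    (ω' : Fin m → Fin m → ℝ)
    (hω' : ∀ i j : Fin m,
      ω' i j =
        if j = k ∧ i ≠ k then
          ω i.castSucc j.castSucc + a * ω i.castSucc (Fin.last m)
        else if i = k ∧ j ≠ k then
          ω i.castSucc j.castSucc + a * ω j.castSucc (Fin.last m)
        else ω i.castSucc j.castSucc)
    (z : Fin m → ℝ) :
    ∀ i j : Fin m, (if i < j then ω' i j * (1 - z i * z j) else 0)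
      = (if i < j then ω i.castSucc j.castSucc * (1 - z i * z j) else 0)
        + (if j = k then (if i < k then a * ω i.castSucc (Fin.last m) * (1 - z i * z k) else 0) else 0)
        + (if i = k then (if k < j then a * ω j.castSucc (Fin.last m) * (1 - z k * z j) else 0) else 0) := by
  intro i j
  rw [hω']
  by_cases hij : i < j
  · by_cases hjk : j = k
    · have hik' : i < k := hjk ▸ hij
      have hik : i ≠ k := ne_of_lt hik'
      simp [hij, hjk, hik, hik']
      ring
    · by_cases hik : i = k
      · have hkj : k < j := hik ▸ hij
        simp [hij, hjk, hik, hkj, Ne.symm hjk]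
        ring
      · simp [hij, hjk, hik]
  · by_cases hjk : j = k
    · have hik : ¬ i < k := hjk ▸ hij
      by_cases hik2 : i = k
      · have : ¬ k < j := by rw [hjk]; exact lt_irrefl k
        simp [hij, hjk, hik, hik2, this]
      · simp [hij, hjk, hik, hik2]
    · by_cases hik : i = k
      · have : ¬ k < j := hik ▸ hij
        simp [hij, hjk, hik, this]
      · simp [hij, hjk, hik]

theorem rqaoa_variable_elimination (m : ℕ) (hm : 1 ≤ m)
    (ω : Fin (m + 1) → Fin (m + 1) → ℝ) (hsymm : ∀ i j, ω i j = ω j i)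
    (k : Fin m) (a : ℝ) (ha : a = 1 ∨ a = -1)
    (ω' : Fin m → Fin m → ℝ)
    (hω' : ∀ i j : Fin m,
      ω' i j =
        if j = k ∧ i ≠ k then
          ω i.castSucc j.castSucc + a * ω i.castSucc (Fin.last m)
        else if i = k ∧ j ≠ k then
          ω i.castSucc j.castSucc + a * ω j.castSucc (Fin.last m)
        else ω i.castSucc j.castSucc) :
    ∀ z : Fin m → ℝ, (∀ i, z i = 1 ∨ z i = -1) →
      cutVal (m + 1) ω (Fin.snoc z (a * z k))
        = cutVal m ω' z
            + ((1 - a) / 2) * ∑ i : Fin m, ω i.castSucc (Fin.last m) := by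
  intro z hz
  have hzk : z k * z k = 1 := by rcases hz k with h|h <;> rw [h] <;> ring
  unfold cutVal
  rw [Fin.sum_univ_castSucc (n := m)]
  have hlast : ∀ j : Fin m, ¬ Fin.last m < j.castSucc := fun j =>
    (Fin.castSucc_lt_last j).asymm
  simp only [Fin.sum_univ_castSucc (n := m), Fin.snoc_castSucc, Fin.snoc_last,
    Fin.castSucc_lt_castSucc_iff, Fin.castSucc_lt_last, lt_irrefl, if_true, if_false,
    hlast, Finset.sum_const_zero, add_zero]
  -- decompose the ω' double sum
  have hB : ∑ i : Fin m, ∑ j : Fin m,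
      (if j = k then (if i < k then a * ω i.castSucc (Fin.last m) * (1 - z i * z k) else 0) else 0)
      = ∑ i : Fin m, if i < k then a * ω i.castSucc (Fin.last m) * (1 - z i * z k) else 0 := by
    simp [Finset.sum_ite_eq']
  have hC : ∑ i : Fin m, ∑ j : Fin m,
      (if i = k then (if k < j then a * ω j.castSucc (Fin.last m) * (1 - z k * z j) else 0) else 0)
      = ∑ j : Fin m, if k < j then a * ω j.castSucc (Fin.last m) * (1 - z k * z j) else 0 := by
    rw [Finset.sum_comm]
    simp [Finset.sum_ite_eq']
  have h1 : ∑ i : Fin m, ∑ j : Fin m, (if i < j then ω' i j * (1 - z i * z j) else 0)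
      = (∑ i : Fin m, ∑ j : Fin m,
          (if i < j then ω i.castSucc j.castSucc * (1 - z i * z j) else 0))
        + ((∑ i : Fin m, if i < k then a * ω i.castSucc (Fin.last m) * (1 - z i * z k) else 0)
          + (∑ j : Fin m, if k < j then a * ω j.castSucc (Fin.last m) * (1 - z k * z j) else 0)) := by
    simp only [rqaoa_keylem m ω k a ω' hω' z, Finset.sum_add_distrib]
    rw [hB, hC]
    ring
  have h2 : (∑ i : Fin m, if i < k then a * ω i.castSucc (Fin.last m) * (1 - z i * z k) else 0)
      + (∑ j : Fin m, if k < j then a * ω j.castSucc (Fin.last m) * (1 - z k * z j) else 0)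
      = ∑ i : Fin m, a * ω i.castSucc (Fin.last m) * (1 - z i * z k) := by
    rw [← Finset.sum_add_distrib]
    refine Finset.sum_congr rfl fun i _ => ?_
    rcases lt_trichotomy i k with h | h | h
    · rw [if_pos h, if_neg h.asymm, add_zero]
    · rw [if_neg (by rw [h]; exact lt_irrefl k), if_neg (by rw [h]; exact lt_irrefl k), h, hzk]
      ring
    · rw [if_neg h.asymm, if_pos h, zero_add]
      ring
  have h3 : ∑ i : Fin m, ω i.castSucc (Fin.last m) * (1 - z i * (a * z k))
      = (∑ i : Fin m, a * ω i.castSucc (Fin.last m) * (1 - z i * z k))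
        + (1 - a) * ∑ i : Fin m, ω i.castSucc (Fin.last m) := by
    rw [Finset.mul_sum, ← Finset.sum_add_distrib]
    exact Finset.sum_congr rfl fun i _ => by ring
  rw [Finset.sum_add_distrib, h1, h2, h3]
  ring
end
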